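/- For all l ∈ [0, π_2/2], sleaf_2(l)² = sin(2θ̄(l)) where θ̄(l) = ∫_0^l sleaf_2(t) dt. -/

import Mathlib

/-!
`sleaf` inverts `arcsl r = ∫₀ʳ dt / √(1 - t⁴)` on `[0, 1]`. Substituting `t = arcsl x` turns
`∫₀ˡ sleaf` into `∫₀^{sleaf l} x dx / √(1 - x⁴) = arcsin (sleaf l ²) / 2`. The change of
variables formula for injective maps needs neither continuity of `sleaf` nor integrability, so
the endpoint `sleaf l = 1`, where `arcsl` has infinite slope, needs no limit argument.
-/

open MeasureTheory intervalIntegral Set Real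

theorem integral_eq_integral_abs_deriv_mul_of_rightInvOn {F f g : ℝ → ℝ} {s : Set ℝ}
    {a b : ℝ} (hab : a ≤ b) (habs : Icc a b ⊆ s) (hF : StrictMonoOn F s)
    (hF' : ∀ x ∈ Ioo a b, HasDerivAt F (f x) x)
    (hg : MapsTo g (Ioo (F a) (F b)) s) (hgF : RightInvOn g F (Ioo (F a) (F b))) :
    ∫ y in F a..F b, g y = ∫ x in a..b, |f x| * x := by
  have ha : a ∈ s := habs (left_mem_Icc.2 hab)
  have hb : b ∈ s := habs (right_mem_Icc.2 hab)
  have hIoo : Ioo a b ⊆ s := Ioo_subset_Icc_self.trans habs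
  have himage : F '' Ioo a b = Ioo (F a) (F b) := by
    refine Subset.antisymm ?_ fun y hy => ⟨g y, ⟨?_, ?_⟩, hgF hy⟩
    · rintro _ ⟨x, hx, rfl⟩
      exact ⟨hF ha (hIoo hx) hx.1, hF (hIoo hx) hb hx.2⟩
    · exact (hF.lt_iff_lt ha (hg hy)).1 (by rw [hgF hy]; exact hy.1)
    · exact (hF.lt_iff_lt (hg hy) hb).1 (by rw [hgF hy]; exact hy.2)
  have hgF_left : ∀ x ∈ Ioo a b, g (F x) = x := fun x hx =>
    have hFx : F x ∈ Ioo (F a) (F b) := himage ▸ mem_image_of_mem F hx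
    hF.injOn (hg hFx) (hIoo hx) (hgF hFx)
  calc ∫ y in F a..F b, g y = ∫ y in F '' Ioo a b, g y := by
        rw [integral_of_le (hF.monotoneOn ha hb hab), integral_Ioc_eq_integral_Ioo, himage]
    _ = ∫ x in Ioo a b, |f x| * g (F x) :=
        integral_image_eq_integral_abs_deriv_smul measurableSet_Ioo
          (fun x hx => (hF' x hx).hasDerivWithinAt) (hF.injOn.mono hIoo) g
    _ = ∫ x in Ioo a b, |f x| * x :=
        setIntegral_congr_fun measurableSet_Ioo fun x hx => by rw [hgF_left x hx]
    _ = ∫ x in a..b, |f x| * x := by rw [integral_of_le hab, integral_Ioc_eq_integral_Ioo]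

noncomputable def arcsl (r : ℝ) : ℝ := ∫ t in (0:ℝ)..r, 1 / √(1 - t ^ 4)

@[simp]
theorem arcsl_zero : arcsl 0 = 0 := integral_same

theorem pow_four_lt_one {x : ℝ} (hx : x ∈ Ioo (-1) 1) : x ^ 4 < 1 := by
  have hx2 : x ^ 2 < 1 := sq_lt_one_iff_abs_lt_one x |>.2 (abs_lt.2 hx)
  nlinarith [sq_nonneg x]

theorem continuousOn_one_div_sqrt_one_sub_pow_four :
    ContinuousOn (fun t : ℝ => 1 / √(1 - t ^ 4)) (Ioo (-1) 1) :=
  continuousOn_const.div (by fun_prop) fun _ hx =>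
    (sqrt_pos.2 (sub_pos.2 (pow_four_lt_one hx))).ne'

theorem intervalIntegrable_one_div_sqrt_one_sub_pow_four {a b : ℝ}
    (ha : a ∈ Icc (-1) 1) (hb : b ∈ Icc (-1) 1) :
    IntervalIntegrable (fun t : ℝ => 1 / √(1 - t ^ 4)) volume a b := by
  refine IntervalIntegrable.mono_set ?_ (ordConnected_Icc.uIcc_subset ha hb |>.trans
    (uIcc_of_le (by norm_num : (-1 : ℝ) ≤ 1)).symm.subset)
  -- domination by `1 / √(1 - t²)`, as `t⁴ ≤ t²` on `[-1, 1]`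
  refine Polynomial.Chebyshev.intervalIntegrable_sqrt_one_sub_sq_inv.mono_fun
    (by measurability) (ae_restrict_of_forall_mem measurableSet_uIoc fun t ht => ?_)
  have ht2 : t ^ 2 ≤ 1 := by
    rw [uIoc_of_le (by norm_num)] at ht
    nlinarith [ht.1, ht.2]
  simp only [norm_inv, norm_of_nonneg (sqrt_nonneg _), sqrt_inv, one_div]
  rcases ht2.eq_or_lt with ht2 | ht2
  · simp [show t ^ 4 = (t ^ 2) ^ 2 by ring, ht2]
  · exact inv_anti₀ (sqrt_pos.2 (by linarith)) (sqrt_le_sqrt (by nlinarith))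

theorem hasDerivAt_arcsl {x : ℝ} (hx : x ∈ Ioo (-1) 1) :
    HasDerivAt arcsl (1 / √(1 - x ^ 4)) x :=
  integral_hasDerivAt_right
    (continuousOn_one_div_sqrt_one_sub_pow_four.mono
      (ordConnected_Ioo.uIcc_subset (by norm_num) hx)).intervalIntegrable
    (continuousOn_one_div_sqrt_one_sub_pow_four.stronglyMeasurableAtFilter isOpen_Ioo x hx)
    (continuousOn_one_div_sqrt_one_sub_pow_four.continuousAt (isOpen_Ioo.mem_nhds hx))

theorem strictMonoOn_arcsl : StrictMonoOn arcsl (Icc (-1) 1) := by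
  intro a ha b hb hab
  have h0 : (0 : ℝ) ∈ Icc (-1) 1 := by norm_num
  rw [← sub_pos, arcsl, arcsl, integral_interval_sub_left
    (intervalIntegrable_one_div_sqrt_one_sub_pow_four h0 hb)
    (intervalIntegrable_one_div_sqrt_one_sub_pow_four h0 ha)]
  refine intervalIntegral_pos_of_pos_on (intervalIntegrable_one_div_sqrt_one_sub_pow_four ha hb)
    (fun x hx => ?_) hab
  have hx1 : x ∈ Ioo (-1) 1 := ⟨ha.1.trans_lt hx.1, hx.2.trans_le hb.2⟩
  exact one_div_pos.2 (sqrt_pos.2 (sub_pos.2 (pow_four_lt_one hx1)))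

theorem integral_one_div_sqrt_one_sub_pow_four_mul_self {r : ℝ} (hr : r ∈ Icc (-1) 1) :
    ∫ x in (0:ℝ)..r, 1 / √(1 - x ^ 4) * x = arcsin (r ^ 2) / 2 := by
  have h0 : (0 : ℝ) ∈ Icc (-1) 1 := by norm_num
  have hderiv : ∀ x ∈ Ioo (-1 : ℝ) 1,
      HasDerivAt (fun y => arcsin (y ^ 2) / 2) (1 / √(1 - x ^ 4) * x) x := by
    intro x hx
    have hx2 : x ^ 2 < 1 := sq_lt_one_iff_abs_lt_one x |>.2 (abs_lt.2 hx)
    have := ((hasDerivAt_arcsin (by nlinarith) hx2.ne).comp (h := fun y => y ^ 2) x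
      (hasDerivAt_pow 2 x)).div_const 2
    rw [← pow_mul] at this
    exact this.congr_deriv (by push_cast; ring)
  rw [integral_eq_sub_of_hasDeriv_right (f := fun y => arcsin (y ^ 2) / 2) (by fun_prop)
    (fun x hx => ?_) ((intervalIntegrable_one_div_sqrt_one_sub_pow_four h0 hr).mul_continuousOn
      (g := fun x => x) continuousOn_id)]
  · simp
  · refine (hderiv x ⟨?_, ?_⟩).hasDerivWithinAt
    · exact lt_of_le_of_lt (le_min (by norm_num) hr.1) hx.1
    · exact lt_of_lt_of_le hx.2 (max_le (by norm_num) hr.2)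

theorem sleaf_sq_eq_sin_general (π₂ : ℝ)
    (sleaf : ℝ → ℝ)
    (hs : ∀ l ∈ Set.Icc 0 (π₂ / 2), sleaf l ∈ Set.Icc (0:ℝ) 1 ∧
      (∫ t in (0:ℝ)..(sleaf l), 1 / Real.sqrt (1 - t ^ 4)) = l) :
    ∀ l ∈ Set.Icc 0 (π₂ / 2),
      (sleaf l) ^ 2 = Real.sin (2 * ∫ t in (0:ℝ)..l, sleaf t) := by
  intro l hl
  obtain ⟨⟨hr0, hr1⟩, hrl⟩ : sleaf l ∈ Icc 0 1 ∧ arcsl (sleaf l) = l := hs l hl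
  have hdom : Ioo (arcsl 0) (arcsl (sleaf l)) ⊆ Icc 0 (π₂ / 2) := by
    rw [arcsl_zero, hrl]
    exact fun y hy => ⟨hy.1.le, hy.2.le.trans hl.2⟩
  have hθ : ∫ t in (0:ℝ)..l, sleaf t = arcsin (sleaf l ^ 2) / 2 := calc
    ∫ t in (0:ℝ)..l, sleaf t = ∫ t in arcsl 0..arcsl (sleaf l), sleaf t := by
      rw [arcsl_zero, hrl]
    _ = ∫ x in (0:ℝ)..sleaf l, |1 / √(1 - x ^ 4)| * x :=
      integral_eq_integral_abs_deriv_mul_of_rightInvOn hr0 (Icc_subset_Icc (by norm_num) hr1)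
        strictMonoOn_arcsl
        (fun x hx => hasDerivAt_arcsl ⟨by linarith [hx.1], hx.2.trans_le hr1⟩)
        (fun y hy => Icc_subset_Icc (by norm_num) le_rfl (hs y (hdom hy)).1)
        (fun y hy => (hs y (hdom hy)).2)
    _ = arcsin (sleaf l ^ 2) / 2 := by
      simp_rw [abs_of_nonneg (one_div_nonneg.2 (sqrt_nonneg _))]
      exact integral_one_div_sqrt_one_sub_pow_four_mul_self ⟨by linarith, hr1⟩
  rw [hθ, mul_div_cancel₀ _ two_ne_zero, sin_arcsin (by nlinarith) (by nlinarith)]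

theorem sleaf_sq_eq_sin (π₂ : ℝ) (hπ : π₂ = 2 * ∫ t in (0:ℝ)..1, 1 / Real.sqrt (1 - t ^ 4))
    (sleaf : ℝ → ℝ)
    (hs : ∀ l ∈ Set.Icc 0 (π₂ / 2), sleaf l ∈ Set.Icc (0:ℝ) 1 ∧
      (∫ t in (0:ℝ)..(sleaf l), 1 / Real.sqrt (1 - t ^ 4)) = l) :
    ∀ l ∈ Set.Icc 0 (π₂ / 2),
      (sleaf l) ^ 2 = Real.sin (2 * ∫ t in (0:ℝ)..l, sleaf t) :=
  sleaf_sq_eq_sin_general π₂ sleaf hs
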